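/- arXiv:2402.17712 — 5 statements merged into one kernel-verified Lean document; each statement's English description precedes it below -/
import Mathlib

section
/- Let a < b be real numbers, p ∈ ℕ, f : (a,b) → ℝ integrable, and c ∈ ℝ. Then there exists a unique real polynomial q of degree at most p such that q(b) = c and ∫_a^b q(t)·r(t) dt = ∫_a^b f(t)·r(t) dt for every real polynomial r of degree at most p−1 (for p = 0 the orthogonality condition is vacuous). Consequently the map 𝓘_p sending f (with prescribed value f(b) at the right endpoint) to this polynomial is a projection: if f is itself a polynomial of degree at most p, then q = f. -/
/-!
Writing `q = (X - b) s` for a polynomial `q` of degree `≤ p` vanishing at `b`, the cofactor `s`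
has degree `< p`, so orthogonality to `s` gives `∫_a^b (b - t) s(t)² dt = 0`, forcing `s = 0`.
Hence the linear map `q ↦ (q(b), r ↦ ∫_a^b q r)` from `P_p` to `ℝ × P_{p-1}^*` is
injective; both spaces have dimension `p + 1`, so it is bijective, and `𝓘_p f` is the preimage
of `(c, r ↦ ∫_a^b f r)`.
-/

open MeasureTheory Polynomial

theorem integral_sub_mul_eval_sq_pos {a b : ℝ} (hab : a < b) {s : ℝ[X]} (hs : s ≠ 0) :
    0 < ∫ t in a..b, (b - t) * s.eval t ^ 2 := by
  obtain ⟨t₀, ht₀, hroot⟩ := (Set.Ioo_infinite hab).exists_notMem_finset s.roots.toFinset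
  refine intervalIntegral.integral_pos hab (by fun_prop) (fun t ht => ?_)
    ⟨t₀, Set.Ioo_subset_Icc_self ht₀, ?_⟩
  · exact mul_nonneg (sub_nonneg.2 ht.2) (sq_nonneg _)
  · have : s.eval t₀ ≠ 0 := by simpa [hs] using hroot
    exact mul_pos (sub_pos.2 ht₀.2) (by positivity)

theorem eq_zero_of_eval_eq_zero_of_integral_mul_eq_zero {a b : ℝ} (hab : a < b) {p : ℕ}
    {q : ℝ[X]} (hdeg : q.degree ≤ p) (hb : q.eval b = 0)
    (horth : ∀ r : ℝ[X], r.degree < p → ∫ t in a..b, q.eval t * r.eval t = 0) :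
    q = 0 := by
  by_contra hq
  set s := q /ₘ (X - C b)
  have hqs : (X - C b) * s = q := mul_divByMonic_eq_iff_isRoot.2 hb
  have hs : s ≠ 0 := by rintro hs; simp [← hqs, hs] at hq
  have hsdeg : s.degree < p := (degree_divByMonic_lt q _ hq (by simp)).trans_le hdeg
  have hneg : ∫ t in a..b, q.eval t * s.eval t = -∫ t in a..b, (b - t) * s.eval t ^ 2 := by
    rw [← intervalIntegral.integral_neg, ← hqs]
    congr 1 with t
    simp only [eval_mul, eval_sub, eval_X, eval_C]
    ring
  linarith [horth s hsdeg, integral_sub_mul_eval_sq_pos hab hs]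

noncomputable section

variable {a b : ℝ} {f : ℝ → ℝ}

def weightedIntegral (hf : IntervalIntegrable f volume a b) : ℝ[X] →ₗ[ℝ] ℝ where
  toFun r := ∫ t in a..b, f t * r.eval t
  map_add' r s := by
    simp only [eval_add, mul_add]
    exact intervalIntegral.integral_add (hf.mul_continuousOn r.continuous.continuousOn)
      (hf.mul_continuousOn s.continuous.continuousOn)
  map_smul' m r := by
    simp only [eval_smul, smul_eq_mul, RingHom.id_apply, mul_left_comm (f _)]
    exact intervalIntegral.integral_const_mul m _

theorem weightedIntegral_apply (hf : IntervalIntegrable f volume a b) (r : ℝ[X]) :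
    weightedIntegral hf r = ∫ t in a..b, f t * r.eval t := rfl

variable (a b) in
def polynomialPairing : ℝ[X] →ₗ[ℝ] ℝ[X] →ₗ[ℝ] ℝ where
  toFun q := weightedIntegral (q.continuous.intervalIntegrable a b)
  map_add' q q' := by
    refine LinearMap.ext fun r => ?_
    simp only [weightedIntegral_apply, LinearMap.add_apply, eval_add, add_mul]
    exact intervalIntegral.integral_add ((q.continuous.mul r.continuous).intervalIntegrable a b)
      ((q'.continuous.mul r.continuous).intervalIntegrable a b)
  map_smul' m q := by
    refine LinearMap.ext fun r => ?_
    simp only [weightedIntegral_apply, LinearMap.smul_apply, eval_smul, smul_eq_mul,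
      RingHom.id_apply, mul_assoc]
    exact intervalIntegral.integral_const_mul m _

theorem polynomialPairing_apply (q r : ℝ[X]) :
    polynomialPairing a b q r = ∫ t in a..b, q.eval t * r.eval t := rfl

def IsRadauProjection (a b : ℝ) (p : ℕ) (f : ℝ → ℝ) (c : ℝ) (q : ℝ[X]) : Prop :=
  q.degree ≤ p ∧ q.eval b = c ∧
    ∀ r : ℝ[X], r.degree < p →
      ∫ t in a..b, q.eval t * r.eval t = ∫ t in a..b, f t * r.eval t

variable (a b) in
def radauMap (p : ℕ) : degreeLT ℝ (p + 1) →ₗ[ℝ] ℝ × Module.Dual ℝ (degreeLT ℝ p) :=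
  ((leval b).prod ((polynomialPairing a b).compl₂ (degreeLT ℝ p).subtype)).comp
    (degreeLT ℝ (p + 1)).subtype

theorem degree_le_of_mem_degreeLT_succ {p : ℕ} {q : ℝ[X]} (hq : q ∈ degreeLT ℝ (p + 1)) :
    q.degree ≤ p :=
  mem_degreeLE.1 (degreeLT_succ_eq_degreeLE (R := ℝ) ▸ hq)

theorem radauMap_eq_iff (hf : IntervalIntegrable f volume a b) {p : ℕ}
    (q : degreeLT ℝ (p + 1)) (c : ℝ) :
    radauMap a b p q = (c, (weightedIntegral hf).comp (degreeLT ℝ p).subtype) ↔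
      IsRadauProjection a b p f c q := by
  simp only [IsRadauProjection, radauMap, Prod.ext_iff, LinearMap.ext_iff, Subtype.forall,
    mem_degreeLT]
  simp [degree_le_of_mem_degreeLT_succ q.2, polynomialPairing_apply, weightedIntegral_apply]

theorem radauMap_injective (hab : a < b) (p : ℕ) : Function.Injective (radauMap a b p) := by
  refine (injective_iff_map_eq_zero _).2 fun q hq => Subtype.ext ?_
  obtain ⟨hb, horth⟩ := Prod.ext_iff.1 hq
  refine eq_zero_of_eval_eq_zero_of_integral_mul_eq_zero hab
    (degree_le_of_mem_degreeLT_succ q.2) hb fun r hr => ?_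
  simpa [radauMap, polynomialPairing_apply] using
    LinearMap.congr_fun horth ⟨r, mem_degreeLT.2 hr⟩

instance (n : ℕ) : FiniteDimensional ℝ (degreeLT ℝ n) :=
  (degreeLTEquiv ℝ n).symm.finiteDimensional

theorem radauMap_surjective (hab : a < b) (p : ℕ) : Function.Surjective (radauMap a b p) := by
  refine (LinearMap.injective_iff_surjective_of_finrank_eq_finrank ?_).1
    (radauMap_injective hab p)
  simp [Module.finrank_prod, (degreeLTEquiv ℝ _).finrank_eq, add_comm]

theorem existsUnique_isRadauProjection (hab : a < b) (p : ℕ)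
    (hf : IntervalIntegrable f volume a b) (c : ℝ) :
    ∃! q : ℝ[X], IsRadauProjection a b p f c q := by
  obtain ⟨q, hq⟩ :=
    radauMap_surjective hab p (c, (weightedIntegral hf).comp (degreeLT ℝ p).subtype)
  refine ⟨q, (radauMap_eq_iff hf q c).1 hq, fun q' hq' => ?_⟩
  have hmem : q' ∈ degreeLT ℝ (p + 1) := by
    rw [degreeLT_succ_eq_degreeLE]
    exact mem_degreeLE.2 hq'.1
  have hq'map := (radauMap_eq_iff hf ⟨q', hmem⟩ c).2 hq'
  exact congrArg Subtype.val (radauMap_injective hab p (hq'map.trans hq.symm))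

theorem isRadauProjection_of_eqOn (hab : a ≤ b) {p : ℕ} {q₀ : ℝ[X]}
    (hdeg : q₀.degree ≤ p) (hfq₀ : Set.EqOn f q₀.eval (Set.Ioo a b)) :
    IsRadauProjection a b p f (q₀.eval b) q₀ :=
  ⟨hdeg, rfl, fun _ _ => intervalIntegral.integral_congr_Ioo_of_le hab fun t ht => by
    rw [hfq₀ ht]⟩

end

/-- existence and uniqueness of the projection `𝓘_p f` on a single
interval `(a,b)`: a polynomial `q` of degree at most `p` with prescribed right
endpoint value `q(b) = c` and with `∫_a^b q r = ∫_a^b f r` for every polynomial `r`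
of degree at most `p-1` (i.e. `deg r < p`); moreover the map is a projection:
if `f` coincides on `(a,b)` with a polynomial `q₀` of degree at most `p` and
`c = q₀(b)`, then `q = q₀`. -/
theorem stmt_0 (a b : ℝ) (hab : a < b) (p : ℕ) (f : ℝ → ℝ)
    (hf : IntervalIntegrable f volume a b) (c : ℝ) :
    (∃! q : Polynomial ℝ, q.degree ≤ (p : ℕ) ∧ q.eval b = c ∧
      ∀ r : Polynomial ℝ, r.degree < (p : ℕ) →
        (∫ t in a..b, q.eval t * r.eval t) = ∫ t in a..b, f t * r.eval t) ∧
    (∀ q₀ : Polynomial ℝ, q₀.degree ≤ (p : ℕ) →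
      (∀ t ∈ Set.Ioo a b, f t = q₀.eval t) → c = q₀.eval b →
      ∀ q : Polynomial ℝ,
        (q.degree ≤ (p : ℕ) ∧ q.eval b = c ∧
          ∀ r : Polynomial ℝ, r.degree < (p : ℕ) →
            (∫ t in a..b, q.eval t * r.eval t) = ∫ t in a..b, f t * r.eval t) →
        q = q₀) := by
  obtain ⟨q, hq, huniq⟩ := existsUnique_isRadauProjection hab p hf c
  refine ⟨⟨q, hq, huniq⟩, fun q₀ hdeg hfq₀ hc q' hq' => ?_⟩
  subst hc
  exact (huniq q' hq').trans (huniq q₀ (isRadauProjection_of_eqOn hab.le hdeg hfq₀)).symm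
end

section
/- Let p ∈ ℕ and z ∈ ℂ with |z| ≤ 1. Then every eigenvalue λ of the p-CQ symbol δ(z) satisfies Re λ ≥ (1 − |z|²)/2. In particular, for |z| < 1 the map δ(z) is invertible and its spectrum is contained in the open right half-plane {w ∈ ℂ : Re w > 0}. -/
/-!
Write `⟪f, g⟫ = ∫₀¹ f ḡ`. Testing the eigenvalue equation with `v = ū` and integrating by parts,
`2 Re ⟪u', u⟫ = |u(1)|² - |u(0)|²`, gives
`Re λ ‖u‖² = (|u(1)|² + |u(0)|²)/2 - Re (z u(1) conj u(0)) ≥ (1 - |z|²) |u(1)|² / 2`,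
so in particular `Re λ ≥ 0`. Testing with `v = t ū'` gives `∫₀¹ t |u'|² = λ conj ⟪t u', u⟫`,
so `Re λ ≥ 0` forces `Re ⟪t u', u⟫ ≥ 0`; integrating `(t |u|²)'` then yields
`‖u‖² + 2 Re ⟪t u', u⟫ = |u(1)|²`, i.e. `‖u‖² ≤ |u(1)|²`. Combining the two bounds gives
`Re λ ≥ (1 - |z|²)/2`.
-/

open MeasureTheory Polynomial ComplexConjugate Set

lemma Polynomial.continuous_eval_ofReal (q : ℂ[X]) : Continuous fun t : ℝ => q.eval (t : ℂ) := by
  fun_prop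

lemma Polynomial.eval_map_conj_ofReal (q : ℂ[X]) (t : ℝ) :
    (q.map (starRingEnd ℂ)).eval (t : ℂ) = conj (q.eval (t : ℂ)) := by
  simpa using eval_map_apply (p := q) (f := starRingEnd ℂ) (x := (t : ℂ))

lemma Polynomial.exists_mem_Ioo_eval_ofReal_ne_zero {q : ℂ[X]} (hq : q ≠ 0) {a b : ℝ}
    (hab : a < b) : ∃ t ∈ Ioo a b, q.eval (t : ℂ) ≠ 0 := by
  by_contra! h
  refine hq (eq_zero_of_infinite_isRoot q ((Ioo_infinite hab).image
    Complex.ofReal_injective.injOn |>.mono ?_))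
  rintro _ ⟨t, ht, rfl⟩
  exact h t ht

lemma Polynomial.degree_X_mul_derivative_le {R : Type*} [Semiring R] [Nontrivial R] (p : R[X]) :
    (X * derivative p).degree ≤ p.degree := by
  rcases eq_or_ne p 0 with rfl | hp
  · simp
  rw [X_mul, degree_mul_X]
  exact Nat.WithBot.add_one_le_of_lt (degree_derivative_lt hp)

noncomputable def l2Inner (f g : ℂ[X]) : ℂ :=
  ∫ t in (0 : ℝ)..1, f.eval (t : ℂ) * conj (g.eval (t : ℂ))

lemma intervalIntegrable_eval_mul_conj_eval (f g : ℂ[X]) (a b : ℝ) :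
    IntervalIntegrable (fun t : ℝ => f.eval (t : ℂ) * conj (g.eval (t : ℂ))) volume a b :=
  (f.continuous_eval_ofReal.mul
    (Complex.continuous_conj.comp g.continuous_eval_ofReal)).intervalIntegrable a b

lemma l2Inner_add_left (f g h : ℂ[X]) : l2Inner (f + g) h = l2Inner f h + l2Inner g h := by
  simp only [l2Inner, eval_add, add_mul]
  exact intervalIntegral.integral_add (intervalIntegrable_eval_mul_conj_eval f h 0 1)
    (intervalIntegrable_eval_mul_conj_eval g h 0 1)

lemma conj_l2Inner (f g : ℂ[X]) : conj (l2Inner f g) = l2Inner g f := by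
  simp only [l2Inner, ← intervalIntegral.intervalIntegral_conj, map_mul, Complex.conj_conj,
    mul_comm]

lemma l2Inner_X_mul_left (f g : ℂ[X]) : l2Inner (X * f) g = l2Inner f (X * g) := by
  simp only [l2Inner, eval_mul, eval_X, map_mul, Complex.conj_ofReal]
  congr 1 with t
  ring

lemma l2Inner_derivative_add_l2Inner_derivative (f g : ℂ[X]) :
    l2Inner (derivative f) g + l2Inner f (derivative g) =
      f.eval 1 * conj (g.eval 1) - f.eval 0 * conj (g.eval 0) := by
  have hderiv (t : ℝ) : HasDerivAt (fun s : ℝ => (f * g.map (starRingEnd ℂ)).eval (s : ℂ))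
      ((derivative (f * g.map (starRingEnd ℂ))).eval (t : ℂ)) t :=
    ((f * g.map (starRingEnd ℂ)).hasDerivAt (t : ℂ)).comp_ofReal
  have hftc := intervalIntegral.integral_eq_sub_of_hasDerivAt (fun t _ => hderiv t)
    ((continuous_eval_ofReal _).intervalIntegrable 0 1)
  simp only [derivative_mul, derivative_map, eval_add, eval_mul, eval_map_conj_ofReal] at hftc
  rw [intervalIntegral.integral_add (intervalIntegrable_eval_mul_conj_eval _ _ 0 1)
    (intervalIntegrable_eval_mul_conj_eval f (derivative g) 0 1)] at hftc
  simpa [l2Inner] using hftc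

lemma l2Inner_X_pow_mul_self (k : ℕ) (f : ℂ[X]) :
    l2Inner (X ^ k * f) f =
      ((∫ t in (0 : ℝ)..1, t ^ k * Complex.normSq (f.eval (t : ℂ)) : ℝ) : ℂ) := by
  rw [← intervalIntegral.integral_ofReal]
  simp only [l2Inner, eval_mul, eval_pow, eval_X, mul_assoc, Complex.mul_conj]
  push_cast
  rfl

lemma l2Inner_self (f : ℂ[X]) :
    l2Inner f f = ((∫ t in (0 : ℝ)..1, Complex.normSq (f.eval (t : ℂ)) : ℝ) : ℂ) := by
  simpa using l2Inner_X_pow_mul_self 0 f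

lemma integral_pow_mul_normSq_eval_pos (k : ℕ) {f : ℂ[X]} (hf : f ≠ 0) :
    0 < ∫ t in (0 : ℝ)..1, t ^ k * Complex.normSq (f.eval (t : ℂ)) := by
  obtain ⟨c, hc, hfc⟩ := f.exists_mem_Ioo_eval_ofReal_ne_zero hf zero_lt_one
  refine intervalIntegral.integral_pos zero_lt_one (by fun_prop) (fun t ht => ?_)
    ⟨c, Ioo_subset_Icc_self hc, mul_pos (pow_pos hc.1 k) (Complex.normSq_pos.2 hfc)⟩
  exact mul_nonneg (pow_nonneg ht.1.le k) (Complex.normSq_nonneg _)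

lemma re_nonneg_of_ofReal_eq_mul_conj {lam A : ℂ} {S : ℝ} (hS : 0 ≤ S) (hlam : 0 ≤ lam.re)
    (hne : lam ≠ 0) (h : (S : ℂ) = lam * conj A) : 0 ≤ A.re := by
  have hre : S * lam.re = Complex.normSq lam * A.re := by
    have := congrArg Complex.re (congrArg (· * conj lam) h)
    simp only [Complex.mul_re, Complex.ofReal_re, Complex.ofReal_im, Complex.conj_re,
      Complex.conj_im, Complex.mul_im, Complex.normSq_apply] at this ⊢
    linear_combination this
  exact nonneg_of_mul_nonneg_right (hre ▸ mul_nonneg hS hlam) (Complex.normSq_pos.2 hne)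

structure IsCQEigenpair (p : ℕ) (z lam : ℂ) (u : ℂ[X]) : Prop where
  ne_zero : u ≠ 0
  degree_le : u.degree ≤ p
  weak_eq : ∀ v : ℂ[X], v.degree ≤ (p : ℕ) →
    (∫ t in (0:ℝ)..1, (derivative u).eval (t : ℂ) * v.eval (t : ℂ))
        + u.eval 0 * v.eval 0 - z * (u.eval 1 * v.eval 0)
      = lam * ∫ t in (0:ℝ)..1, u.eval (t : ℂ) * v.eval (t : ℂ)

namespace IsCQEigenpair

variable {p : ℕ} {z lam : ℂ} {u : ℂ[X]}

/-- The pairing in `weak_eq` is bilinear; testing with `v = ḡ` turns it into `l2Inner`. -/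
lemma l2Inner_eq (h : IsCQEigenpair p z lam u) {g : ℂ[X]} (hg : g.degree ≤ p) :
    l2Inner (derivative u) g + (u.eval 0 - z * u.eval 1) * conj (g.eval 0) =
      lam * l2Inner u g := by
  have := h.weak_eq (g.map (starRingEnd ℂ)) (degree_map_le.trans hg)
  simp only [eval_map_conj_ofReal, ← Complex.ofReal_zero] at this
  simp only [l2Inner]
  push_cast at this
  linear_combination this

lemma le_re_mul_integral (h : IsCQEigenpair p z lam u) :
    (1 - ‖z‖ ^ 2) * ‖u.eval 1‖ ^ 2 / 2 ≤
      lam.re * ∫ t in (0 : ℝ)..1, Complex.normSq (u.eval (t : ℂ)) := by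
  set c0 := u.eval 0
  set c1 := u.eval 1
  set N := ∫ t in (0 : ℝ)..1, Complex.normSq (u.eval (t : ℂ))
  set J := l2Inner (derivative u) u
  have heq : J + (Complex.normSq c0 : ℂ) - z * c1 * conj c0 = lam * N := by
    rw [← l2Inner_self, ← h.l2Inner_eq h.degree_le, ← Complex.mul_conj]
    ring
  have hibp : J + conj J = (Complex.normSq c1 : ℂ) - Complex.normSq c0 := by
    rw [conj_l2Inner, l2Inner_derivative_add_l2Inner_derivative, Complex.mul_conj,
      Complex.mul_conj]
  replace heq := congrArg Complex.re heq
  replace hibp := congrArg Complex.re hibp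
  simp only [Complex.add_re, Complex.sub_re, Complex.ofReal_re, Complex.conj_re,
    Complex.re_mul_ofReal, Complex.normSq_eq_norm_sq] at heq hibp
  have hw : (z * c1 * conj c0).re ≤ ‖z‖ * ‖c1‖ * ‖c0‖ := by
    simpa using Complex.re_le_norm (z * c1 * conj c0)
  nlinarith [sq_nonneg (‖c0‖ - ‖z‖ * ‖c1‖)]

lemma integral_normSq_le (h : IsCQEigenpair p z lam u) (hlam : 0 ≤ lam.re) :
    ∫ t in (0 : ℝ)..1, Complex.normSq (u.eval (t : ℂ)) ≤ ‖u.eval 1‖ ^ 2 := by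
  set A := l2Inner (X * derivative u) u
  have hA : 0 ≤ A.re := by
    rcases eq_or_ne (derivative u) 0 with hu' | hu'
    · simp [A, l2Inner, hu']
    set S := ∫ t in (0 : ℝ)..1, t ^ 1 * Complex.normSq ((derivative u).eval (t : ℂ))
    have hS : 0 < S := integral_pow_mul_normSq_eval_pos 1 hu'
    have heq : (S : ℂ) = lam * conj A := by
      have := h.l2Inner_eq ((degree_X_mul_derivative_le u).trans h.degree_le)
      rwa [eval_mul, eval_X, zero_mul, map_zero, mul_zero, add_zero, ← l2Inner_X_mul_left,
        ← pow_one X, l2Inner_X_pow_mul_self, pow_one, ← conj_l2Inner (X * derivative u)]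
        at this
    refine re_nonneg_of_ofReal_eq_mul_conj hS.le hlam ?_ heq
    rintro rfl
    simp [hS.ne'] at heq
  have hibp : l2Inner u u + A + conj A = (Complex.normSq (u.eval 1) : ℂ) := by
    have := l2Inner_derivative_add_l2Inner_derivative (X * u) u
    rwa [derivative_mul, derivative_X, one_mul, l2Inner_add_left, l2Inner_X_mul_left u,
      ← conj_l2Inner (X * derivative u), eval_mul, eval_mul, eval_X, eval_X, one_mul, zero_mul,
      zero_mul, sub_zero, Complex.mul_conj] at this
  rw [l2Inner_self] at hibp
  replace hibp := congrArg Complex.re hibp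
  simp only [Complex.add_re, Complex.ofReal_re, Complex.conj_re,
    Complex.normSq_eq_norm_sq (u.eval 1)] at hibp
  linarith

lemma le_re (h : IsCQEigenpair p z lam u) (hz : ‖z‖ ≤ 1) :
    (1 - ‖z‖ ^ 2) / 2 ≤ lam.re := by
  set N := ∫ t in (0 : ℝ)..1, Complex.normSq (u.eval (t : ℂ))
  have hN : 0 < N := by simpa using integral_pow_mul_normSq_eval_pos 0 h.ne_zero
  have hz2 : 0 ≤ 1 - ‖z‖ ^ 2 := by nlinarith [norm_nonneg z]
  have hlower := h.le_re_mul_integral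
  have hlam : 0 ≤ lam.re := by
    refine nonneg_of_mul_nonneg_left (le_trans ?_ hlower) hN
    positivity
  have hupper := h.integral_normSq_le hlam
  refine le_of_mul_le_mul_right ?_ hN
  calc (1 - ‖z‖ ^ 2) / 2 * N ≤ (1 - ‖z‖ ^ 2) * ‖u.eval 1‖ ^ 2 / 2 := by
        rw [div_mul_eq_mul_div]
        gcongr
    _ ≤ lam.re * N := hlower

end IsCQEigenpair

/-- every eigenvalue `λ` of the `p`-CQ symbol `δ(z)` (characterized by the
existence of a nonzero polynomial eigenfunction `u` of degree `≤ p` satisfying the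
variational identity against all test polynomials `v` of degree `≤ p`) satisfies
`Re λ ≥ (1 − |z|²)/2` for `|z| ≤ 1`; in particular for `|z| < 1` the spectrum lies in the
open right half-plane and `δ(z)` is invertible (no zero eigenvalue). -/
theorem stmt_4 (p : ℕ) (z : ℂ) (hz : ‖z‖ ≤ 1) (lam : ℂ)
    (u : Polynomial ℂ) (hu : u ≠ 0) (hdeg : u.degree ≤ (p : ℕ))
    (heig : ∀ v : Polynomial ℂ, v.degree ≤ (p : ℕ) →
      (∫ t in (0:ℝ)..1, (Polynomial.derivative u).eval (t : ℂ) * v.eval (t : ℂ))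
          + u.eval 0 * v.eval 0 - z * (u.eval 1 * v.eval 0)
        = lam * ∫ t in (0:ℝ)..1, u.eval (t : ℂ) * v.eval (t : ℂ)) :
    (1 - ‖z‖ ^ 2) / 2 ≤ lam.re ∧
      (‖z‖ < 1 → 0 < lam.re ∧ lam ≠ 0) := by
  have hre : (1 - ‖z‖ ^ 2) / 2 ≤ lam.re := (IsCQEigenpair.mk hu hdeg heig).le_re hz
  refine ⟨hre, fun hz1 => ?_⟩
  have hpos : 0 < lam.re := by nlinarith [norm_nonneg z]
  exact ⟨hpos, fun h0 => by simp [h0] at hpos⟩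
end

section
/- There exists a constant C > 0 such that for every p ∈ ℕ and every z ∈ ℂ with |z| ≤ 1, every eigenvalue λ of the p-CQ symbol δ(z) satisfies |λ| ≤ C·(p+1)². -/
/-!
Expand an eigenfunction as `u = ∑ₖ cₖ Pₖ` in the shifted Legendre polynomials `Pₖ` and test the
eigenvalue equation against `v = ∑ₖ conj(cₖ) Pₖ`. By orthogonality `∫₀¹ u v = ∑ₖ |cₖ|² / (2k + 1)`.
On a pair `(Pₙ, Pₘ)` the three terms of the form are bounded by `2`, `1` and `1`: `Pₙ(0) = 1`,
`Pₙ(1) = ±1`, and `∫₀¹ Pₙ' Pₘ` vanishes by orthogonality when `n ≤ m`, and after one integration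
by parts is a boundary term when `m < n`. Hence `|λ| ∑ₖ |cₖ|² / (2k + 1) ≤ 4 (∑ₖ |cₖ|)²`, and
Cauchy–Schwarz with `∑_{k ≤ p} (2k + 1) = (p + 1)²` gives `|λ| ≤ 4 (p + 1)²`.
-/

open MeasureTheory Polynomial Finset ComplexConjugate

namespace Polynomial

theorem eval_iterate_derivative_eq_zero_of_pow_dvd {R : Type*} [CommRing R] {f : R[X]} {a : R}
    {n j : ℕ} (h : (X - C a) ^ n ∣ f) (hj : j < n) : (derivative^[j] f).eval a = 0 :=
  dvd_iff_isRoot.mp <| (dvd_pow_self _ (Nat.sub_ne_zero_of_lt hj)).trans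
    (pow_sub_dvd_iterate_derivative_of_pow_dvd j h)

theorem degree_X_mul_derivative_sub_lt {R : Type*} [CommRing R] (p : R[X]) :
    (X * derivative p - C (p.natDegree : R) * p).degree < (p.natDegree : WithBot ℕ) := by
  rw [degree_lt_iff_coeff_zero]
  intro m hm
  rcases hm.lt_or_eq with hlt | rfl
  · rw [coeff_sub, coeff_C_mul, coeff_eq_zero_of_natDegree_lt hlt, mul_zero, sub_zero]
    obtain ⟨m, rfl⟩ : ∃ k, m = k + 1 := ⟨m - 1, by omega⟩
    rw [coeff_X_mul, coeff_derivative, coeff_eq_zero_of_natDegree_lt hlt, zero_mul]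
  · rcases h : p.natDegree with _ | d
    · simp
    · rw [coeff_sub, coeff_X_mul, coeff_derivative, coeff_C_mul, ← h]
      push_cast [h]
      ring

end Polynomial

theorem intervalIntegrable_eval (q : ℂ[X]) (a b : ℝ) :
    IntervalIntegrable (fun t : ℝ => q.eval (t : ℂ)) volume a b :=
  (q.continuous.comp Complex.continuous_ofReal).intervalIntegrable a b

noncomputable def unitIntegral : ℂ[X] →ₗ[ℂ] ℂ where
  toFun q := ∫ t in (0 : ℝ)..1, q.eval (t : ℂ)
  map_add' q r := by
    simp only [eval_add]
    exact intervalIntegral.integral_add (intervalIntegrable_eval q 0 1)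
      (intervalIntegrable_eval r 0 1)
  map_smul' c q := by
    simp only [eval_smul, smul_eq_mul, RingHom.id_apply]
    exact intervalIntegral.integral_const_mul c _

theorem unitIntegral_apply (q : ℂ[X]) :
    unitIntegral q = ∫ t in (0 : ℝ)..1, q.eval (t : ℂ) := rfl

theorem unitIntegral_derivative (q : ℂ[X]) :
    unitIntegral (derivative q) = q.eval 1 - q.eval 0 := by
  have h := intervalIntegral.integral_eq_sub_of_hasDerivAt
    (fun t _ => (q.hasDerivAt (t : ℂ)).comp_ofReal) (intervalIntegrable_eval (derivative q) 0 1)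
  simpa [unitIntegral_apply] using h

theorem unitIntegral_derivative_mul (f g : ℂ[X]) :
    unitIntegral (derivative f * g) =
      f.eval 1 * g.eval 1 - f.eval 0 * g.eval 0 - unitIntegral (f * derivative g) := by
  have h := unitIntegral_derivative (f * g)
  rw [derivative_mul, map_add, eval_mul, eval_mul] at h
  linear_combination h

theorem unitIntegral_iterate_derivative_mul {k : ℕ} {f : ℂ[X]}
    (hf : ∀ j < k, (derivative^[j] f).eval 0 = 0 ∧ (derivative^[j] f).eval 1 = 0) (q : ℂ[X]) :
    unitIntegral (derivative^[k] f * q) = (-1) ^ k * unitIntegral (f * derivative^[k] q) := by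
  induction k generalizing f with
  | zero => simp
  | succ k ih =>
    obtain ⟨hf0, hf1⟩ := hf 0 k.succ_pos
    rw [Function.iterate_succ_apply, ih (fun j hj => hf (j + 1) (by omega)),
      unitIntegral_derivative_mul, ← Function.iterate_succ_apply' derivative]
    simp only [Function.iterate_zero_apply] at hf0 hf1
    rw [hf0, hf1]
    ring

noncomputable def legendre (n : ℕ) : ℂ[X] := (shiftedLegendre n).map (algebraMap ℤ ℂ)

theorem degree_legendre (n : ℕ) : (legendre n).degree = n := by
  rw [legendre, degree_map_eq_of_injective (RingHom.injective_int _), degree_shiftedLegendre]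

theorem legendre_ne_zero (n : ℕ) : legendre n ≠ 0 := by
  simp [← degree_eq_bot, degree_legendre]

theorem legendre_eval_zero (n : ℕ) : (legendre n).eval 0 = 1 := by
  rw [legendre, eval_map_algebraMap, aeval_def, eval₂_at_zero, coeff_shiftedLegendre]
  simp

theorem legendre_eval_one (n : ℕ) : (legendre n).eval 1 = (-1) ^ n := by
  rw [legendre, eval_map_algebraMap, shiftedLegendre_eval_symm, sub_self, ← eval_map_algebraMap,
    ← legendre, legendre_eval_zero, mul_one]

theorem factorial_mul_legendre (n : ℕ) :
    (n.factorial : ℂ[X]) * legendre n = derivative^[n] (X ^ n * (1 - X) ^ n) := by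
  have h := congr_arg (map (algebraMap ℤ ℂ)) (factorial_mul_shiftedLegendre_eq n)
  rw [← iterate_derivative_map] at h
  simpa [legendre] using h

theorem eval_iterate_derivative_X_pow_mul_one_sub_X_pow {n j : ℕ} (hj : j < n) :
    (derivative^[j] ((X : ℂ[X]) ^ n * (1 - X) ^ n)).eval 0 = 0 ∧
      (derivative^[j] ((X : ℂ[X]) ^ n * (1 - X) ^ n)).eval 1 = 0 :=
  ⟨eval_iterate_derivative_eq_zero_of_pow_dvd (by simp) hj,
    eval_iterate_derivative_eq_zero_of_pow_dvd (Dvd.intro_left (X ^ n * (-1) ^ n)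
      (by rw [mul_assoc, ← mul_pow, map_one, neg_one_mul, neg_sub])) hj⟩

theorem unitIntegral_legendre_mul {n : ℕ} {q : ℂ[X]} (hq : q.degree < n) :
    unitIntegral (legendre n * q) = 0 := by
  rcases eq_or_ne q 0 with rfl | hq0
  · simp
  have h := unitIntegral_iterate_derivative_mul (k := n)
    (fun _ hj => eval_iterate_derivative_X_pow_mul_one_sub_X_pow hj) q
  rw [← factorial_mul_legendre, mul_assoc, ← nsmul_eq_mul, map_nsmul,
    iterate_derivative_eq_zero ((natDegree_lt_iff_degree_lt hq0).2 hq)] at h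
  simpa [n.factorial_ne_zero] using h

theorem unitIntegral_mul_legendre {n : ℕ} {q : ℂ[X]} (hq : q.degree < n) :
    unitIntegral (q * legendre n) = 0 := by
  rw [mul_comm, unitIntegral_legendre_mul hq]

-- `∫₀¹ (X P²)' = P(1)² = 1`, and `∫₀¹ P · X P' = n ∫₀¹ P²` because `X P' - n P` has degree `< n`.
theorem unitIntegral_legendre_mul_self (n : ℕ) :
    unitIntegral (legendre n * legendre n) = 1 / (2 * n + 1) := by
  set P := legendre n
  have hbdry : unitIntegral (derivative (X * P * P)) = 1 := by
    rw [unitIntegral_derivative]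
    simp [P, legendre_eval_one, ← pow_two, ← pow_mul]
  have hdeg := degree_X_mul_derivative_sub_lt P
  rw [natDegree_eq_of_degree_eq_some (degree_legendre n)] at hdeg
  have hortho := unitIntegral_legendre_mul hdeg
  rw [mul_sub, map_sub, sub_eq_zero] at hortho
  have hderiv : derivative (X * P * P) = P * P + (2 : ℂ) • (P * (X * derivative P)) := by
    rw [smul_eq_C_mul, C_ofNat]
    simp only [derivative_mul, derivative_X]
    ring
  have hmul : unitIntegral (P * (X * derivative P)) = n * unitIntegral (P * P) := by
    rw [hortho, mul_left_comm, ← smul_eq_C_mul, map_smul, smul_eq_mul]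
  rw [hderiv, map_add, map_smul, hmul, smul_eq_mul] at hbdry
  have h2n : (2 * n + 1 : ℂ) ≠ 0 := by norm_cast
  field_simp
  linear_combination hbdry

theorem norm_unitIntegral_derivative_legendre_mul_le (n m : ℕ) :
    ‖unitIntegral (derivative (legendre n) * legendre m)‖ ≤ 2 := by
  rcases lt_or_ge m n with hmn | hnm
  · have hdeg : (derivative (legendre m)).degree < n :=
      (degree_derivative_lt (legendre_ne_zero m)).trans (by simpa [degree_legendre] using hmn)
    rw [unitIntegral_derivative_mul, unitIntegral_legendre_mul hdeg, legendre_eval_one,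
      legendre_eval_one, legendre_eval_zero, legendre_eval_zero, sub_zero, ← pow_add]
    calc ‖(-1 : ℂ) ^ (n + m) - 1 * 1‖ ≤ ‖(-1 : ℂ) ^ (n + m)‖ + ‖(1 : ℂ) * 1‖ :=
          norm_sub_le _ _
      _ = 2 := by norm_num
  · have hdeg : (derivative (legendre n)).degree < m :=
      (degree_derivative_lt (legendre_ne_zero n)).trans_le (by simpa [degree_legendre] using hnm)
    rw [unitIntegral_mul_legendre hdeg, norm_zero]
    norm_num

theorem exists_eq_sum_legendre {u : ℂ[X]} {p : ℕ} (hu : u.degree ≤ p) :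
    ∃ c : ℕ → ℂ, ∑ k ∈ range (p + 1), c k • legendre k = u := by
  let S : Sequence ℂ := ⟨legendre, degree_legendre⟩
  have hunit : ∀ i < p + 1, IsUnit (S i).leadingCoeff := fun i _ =>
    (leadingCoeff_ne_zero.2 (legendre_ne_zero i)).isUnit
  have hmem : u ∈ Submodule.span ℂ (S '' ↑(range (p + 1))) := by
    rw [coe_range, S.span_degreeLT hunit, degreeLT_succ_eq_degreeLE, mem_degreeLE]
    exact hu
  exact (Submodule.mem_span_image_finset_iff_exists_fun' ℂ).mp hmem

theorem degree_sum_smul_legendre_le (p : ℕ) (c : ℕ → ℂ) :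
    (∑ k ∈ range (p + 1), c k • legendre k).degree ≤ p := by
  rw [← mem_degreeLE]
  refine Submodule.sum_mem _ fun k hk => Submodule.smul_mem _ _ (mem_degreeLE.2 ?_)
  rw [degree_legendre, Nat.cast_le]
  exact mem_range_succ_iff.1 hk

theorem LinearMap.apply_sum_smul_sum_smul {ι 𝕜 M : Type*} [CommSemiring 𝕜] [AddCommMonoid M]
    [Module 𝕜 M] (B : M →ₗ[𝕜] M →ₗ[𝕜] 𝕜) (s : Finset ι) (a b : ι → 𝕜) (e : ι → M) :
    B (∑ i ∈ s, a i • e i) (∑ j ∈ s, b j • e j) =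
      ∑ i ∈ s, ∑ j ∈ s, a i * b j * B (e i) (e j) := by
  simp only [map_sum, map_smul, LinearMap.sum_apply, LinearMap.smul_apply, smul_eq_mul, mul_sum]
  rw [sum_comm]
  exact sum_congr rfl fun i _ => sum_congr rfl fun j _ => by ring

theorem LinearMap.norm_apply_sum_smul_sum_smul_le {ι 𝕜 M : Type*} [NormedField 𝕜]
    [AddCommMonoid M] [Module 𝕜 M] (B : M →ₗ[𝕜] M →ₗ[𝕜] 𝕜) (s : Finset ι) (a b : ι → 𝕜)
    (e : ι → M) {K : ℝ} (hB : ∀ i ∈ s, ∀ j ∈ s, ‖B (e i) (e j)‖ ≤ K) :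
    ‖B (∑ i ∈ s, a i • e i) (∑ j ∈ s, b j • e j)‖ ≤ K * (∑ i ∈ s, ‖a i‖) * ∑ j ∈ s, ‖b j‖ := by
  rw [B.apply_sum_smul_sum_smul]
  calc _ ≤ ∑ i ∈ s, ∑ j ∈ s, ‖a i‖ * ‖b j‖ * K :=
        (norm_sum_le _ _).trans <| sum_le_sum fun i hi => (norm_sum_le _ _).trans <|
          sum_le_sum fun j hj => by rw [norm_mul, norm_mul]; gcongr; exact hB i hi j hj
    _ = K * (∑ i ∈ s, ‖a i‖) * ∑ j ∈ s, ‖b j‖ := by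
        rw [mul_assoc, sum_mul_sum, mul_sum]
        exact sum_congr rfl fun i _ => by rw [mul_sum]; exact sum_congr rfl fun j _ => by ring

noncomputable def integralForm : LinearMap.BilinForm ℂ ℂ[X] :=
  (LinearMap.mul ℂ ℂ[X]).compr₂ unitIntegral

theorem integralForm_apply (u v : ℂ[X]) : integralForm u v = unitIntegral (u * v) := rfl

theorem integralForm_legendre (n m : ℕ) :
    integralForm (legendre n) (legendre m) = if n = m then (1 / (2 * n + 1) : ℂ) else 0 := by
  rw [integralForm_apply]
  split_ifs with h
  · rw [h, unitIntegral_legendre_mul_self]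
  · rcases lt_or_gt_of_ne h with h | h
    · exact unitIntegral_mul_legendre (by rwa [degree_legendre, Nat.cast_lt])
    · exact unitIntegral_legendre_mul (by rwa [degree_legendre, Nat.cast_lt])

theorem integralForm_sum_smul_legendre_conj (s : Finset ℕ) (c : ℕ → ℂ) :
    integralForm (∑ k ∈ s, c k • legendre k) (∑ k ∈ s, conj (c k) • legendre k) =
      ((∑ k ∈ s, ‖c k‖ ^ 2 / (2 * k + 1) : ℝ) : ℂ) := by
  rw [integralForm.apply_sum_smul_sum_smul]
  push_cast
  refine sum_congr rfl fun k hk => ?_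
  rw [sum_eq_single k (fun j _ hjk => by rw [integralForm_legendre, if_neg hjk.symm, mul_zero])
    (fun h => absurd hk h), integralForm_legendre, if_pos rfl, Complex.mul_conj,
    Complex.normSq_eq_norm_sq]
  push_cast
  ring

noncomputable def cqForm (z : ℂ) : LinearMap.BilinForm ℂ ℂ[X] :=
  integralForm ∘ₗ derivative + (LinearMap.mul ℂ ℂ).compl₁₂ (leval 0 - z • leval 1) (leval 0)

theorem cqForm_apply (z : ℂ) (u v : ℂ[X]) :
    cqForm z u v =
      unitIntegral (derivative u * v) + u.eval 0 * v.eval 0 - z * (u.eval 1 * v.eval 0) := by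
  simp [cqForm, integralForm_apply]
  ring

theorem norm_cqForm_legendre_le {z : ℂ} (hz : ‖z‖ ≤ 1) (n m : ℕ) :
    ‖cqForm z (legendre n) (legendre m)‖ ≤ 4 := by
  rw [cqForm_apply, legendre_eval_zero, legendre_eval_zero, legendre_eval_one]
  calc _ ≤ ‖unitIntegral (derivative (legendre n) * legendre m)‖ + ‖(1 : ℂ) * 1‖
        + ‖z * ((-1) ^ n * 1)‖ := norm_sub_le_of_le (norm_add_le _ _) le_rfl
    _ ≤ 2 + 1 + 1 := by
        gcongr
        · exact norm_unitIntegral_derivative_legendre_mul_le n m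
        · norm_num
        · simpa using hz
    _ = 4 := by norm_num

theorem sq_sum_le_sq_mul_sum_sq_div_odd (f : ℕ → ℝ) (n : ℕ) :
    (∑ k ∈ range n, f k) ^ 2 ≤ (n : ℝ) ^ 2 * ∑ k ∈ range n, f k ^ 2 / (2 * k + 1) := by
  have hodd : ∀ n : ℕ, ∑ k ∈ range n, (2 * (k : ℝ) + 1) = (n : ℝ) ^ 2 := by
    intro n
    induction n with
    | zero => simp
    | succ n ih => rw [sum_range_succ, ih]; push_cast; ring
  have h := sq_sum_div_le_sum_sq_div (range n) f (g := fun k => 2 * (k : ℝ) + 1)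
    (fun k _ => by positivity)
  rcases n.eq_zero_or_pos with rfl | hn
  · simp
  rw [hodd, div_le_iff₀ (by positivity)] at h
  linarith

/-- there is a constant `C > 0` such that for every `p ∈ ℕ` and every
`z ∈ ℂ` with `|z| ≤ 1`, every eigenvalue `λ` of the `p`-CQ symbol `δ(z)` (characterized
by a nonzero polynomial eigenfunction `u` of degree `≤ p`) satisfies `|λ| ≤ C (p+1)²`. -/
theorem stmt_5 :
    ∃ C : ℝ, 0 < C ∧
      ∀ (p : ℕ) (z : ℂ), ‖z‖ ≤ 1 →
        ∀ (lam : ℂ) (u : Polynomial ℂ), u ≠ 0 → u.degree ≤ (p : ℕ) →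
          (∀ v : Polynomial ℂ, v.degree ≤ (p : ℕ) →
            (∫ t in (0:ℝ)..1, (Polynomial.derivative u).eval (t : ℂ) * v.eval (t : ℂ))
                + u.eval 0 * v.eval 0 - z * (u.eval 1 * v.eval 0)
              = lam * ∫ t in (0:ℝ)..1, u.eval (t : ℂ) * v.eval (t : ℂ)) →
          ‖lam‖ ≤ C * ((p : ℝ) + 1) ^ 2 := by
  refine ⟨4, by norm_num, fun p z hz lam u hu hdeg hE => ?_⟩
  obtain ⟨c, rfl⟩ := exists_eq_sum_legendre hdeg
  set u := ∑ k ∈ range (p + 1), c k • legendre k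
  set v := ∑ k ∈ range (p + 1), conj (c k) • legendre k
  have heq : cqForm z u v = lam * integralForm u v := by
    simpa [cqForm_apply, integralForm_apply, unitIntegral_apply] using
      hE v (degree_sum_smul_legendre_le p _)
  set S := ∑ k ∈ range (p + 1), ‖c k‖ ^ 2 / (2 * k + 1)
  set T := ∑ k ∈ range (p + 1), ‖c k‖
  have hS : 0 < S := by
    obtain ⟨k, hk, hck⟩ : ∃ k ∈ range (p + 1), c k ≠ 0 := by
      by_contra! h
      exact hu (sum_eq_zero fun k hk => by rw [h k hk, zero_smul])
    exact sum_pos' (fun k _ => by positivity)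
      ⟨k, hk, div_pos (pow_pos (norm_pos_iff.2 hck) 2) (by positivity)⟩
  have hbound : ‖cqForm z u v‖ ≤ 4 * T * T := by
    simpa only [Complex.norm_conj] using (cqForm z).norm_apply_sum_smul_sum_smul_le _ c
      (fun k => conj (c k)) legendre fun i _ j _ => norm_cqForm_legendre_le hz i j
  rw [heq, integralForm_sum_smul_legendre_conj, norm_mul, Complex.norm_real,
    Real.norm_of_nonneg hS.le] at hbound
  have hT := sq_sum_le_sq_mul_sum_sq_div_odd (fun k => ‖c k‖) (p + 1)
  push_cast at hT
  refine le_of_mul_le_mul_right ?_ hS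
  calc ‖lam‖ * S ≤ 4 * T ^ 2 := by rwa [sq, ← mul_assoc]
    _ ≤ 4 * (((p : ℝ) + 1) ^ 2 * S) := by gcongr
    _ = 4 * ((p : ℝ) + 1) ^ 2 * S := by ring
end

section
/- Let h > 0, p ∈ ℕ, and let ψ ∈ 𝒮^{p,0}(𝒯_h) be a real-valued piecewise polynomial of degree ≤ p on the uniform mesh with nodes t_n = n·h. Define the antiderivative y(t) := ∫₀^t ψ(τ) dτ. Then the projected antiderivative 𝓘_p y satisfies, for every v ∈ 𝒮̃^{p,0}(𝒯_h): ∫₀^∞ (𝓘_p y)'(t)·v(t) dt + Σ_{n=0}^∞ ⟦𝓘_p y⟧_{t_n}·v(t_n⁺) = ∫₀^∞ ψ(t)·v(t) dt, where the derivative is taken elementwise, ⟦w⟧_{t_n} := w(t_n⁺) − w(t_n⁻), and the convention (𝓘_p y)(t_0⁻) := 0 is used at the first node (so ⟦𝓘_p y⟧_{t_0} = (𝓘_p y)(0⁺)). In other words, 𝓘_p of the exact antiderivative of ψ is the discontinuous Galerkin approximation of the initial value problem y' = ψ, y(0) = 0. -/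
/-!
On an element `[a, b]`, integrate by parts twice: once for `Q` against the test polynomial `V`
and once for the exact antiderivative `y` against `V`. The boundary terms at `b` agree because
`Q` interpolates `y` there, the interior terms `∫ Q V'` and `∫ y V'` agree because `V'` has
degree `< p`, and at `a` the jump term turns `Q(a⁺) V(a)` into `y(a) V(a)`, since the left limit
of `𝓘_p y` at `a` is the value `y(a)` interpolated on the previous element.
-/

open MeasureTheory Set Polynomial

theorem Polynomial.degree_derivative_lt_of_degree_le {R : Type*} [Semiring R] {V : R[X]} {p : ℕ} (hV : V.degree ≤ p) :
    (derivative V).degree < p := by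
  rcases eq_or_ne V 0 with rfl | hV0
  · simp
  · exact (degree_derivative_lt hV0).trans_le hV

theorem integral_derivative_mul_add_jump_eq {a b : ℝ} (hab : a ≤ b) {Q V : ℝ[X]}
    {y f : ℝ → ℝ} (hy : ContinuousOn y (Icc a b)) (hyf : ∀ t ∈ Ioo a b, HasDerivAt y (f t) t)
    (hf : IntervalIntegrable f volume a b) (hQb : Q.eval b = y b)
    (horth : ∫ t in a..b, (Q.eval t - y t) * (derivative V).eval t = 0) :
    (∫ t in a..b, (derivative Q).eval t * V.eval t) + (Q.eval a - y a) * V.eval a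
      = ∫ t in a..b, f t * V.eval t := by
  have hy' : ContinuousOn y (uIcc a b) := by rwa [uIcc_of_le hab]
  have hQ := intervalIntegral.integral_mul_deriv_eq_deriv_mul (a := a) (b := b)
    (fun t _ => Q.hasDerivAt t) (fun t _ => V.hasDerivAt t)
    ((derivative Q).continuous.intervalIntegrable a b)
    ((derivative V).continuous.intervalIntegrable a b)
  have hY := intervalIntegral.integral_mul_deriv_eq_deriv_mul_of_hasDerivAt hy'
    V.continuous.continuousOn (by simpa only [min_eq_left hab, max_eq_right hab] using hyf)
    (fun t _ => V.hasDerivAt t) hf ((derivative V).continuous.intervalIntegrable a b)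
  have hQV' : ∫ t in a..b, Q.eval t * (derivative V).eval t
      = ∫ t in a..b, y t * (derivative V).eval t := by
    have hsplit := intervalIntegral.integral_sub
      ((Q.continuous.mul (derivative V).continuous).intervalIntegrable a b)
      ((hy'.mul (derivative V).continuous.continuousOn).intervalIntegrable (μ := volume))
    simp only [Pi.mul_apply, ← sub_mul] at hsplit
    linarith
  linear_combination hQ - hY - hQV' + V.eval b * hQb

section PiecewisePolynomial

variable {h : ℝ} {P : ℕ → ℝ[X]} {ψ : ℝ → ℝ}

theorem node_le_succ_node (hh : 0 < h) (n : ℕ) : (n : ℝ) * h ≤ ((n : ℝ) + 1) * h :=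
  mul_le_mul_of_nonneg_right (by linarith) hh.le

theorem intervalIntegrable_element (hh : 0 < h)
    (hψ : ∀ n : ℕ, ∀ t ∈ Ioc ((n : ℝ) * h) (((n : ℝ) + 1) * h), ψ t = (P n).eval t) (n : ℕ) :
    IntervalIntegrable ψ volume ((n : ℝ) * h) (((n : ℝ) + 1) * h) := by
  refine (intervalIntegrable_congr fun t ht => ?_).1 ((P n).continuous.intervalIntegrable _ _)
  rw [uIoc_of_le (node_le_succ_node hh n)] at ht
  exact (hψ n t ht).symm

theorem intervalIntegrable_zero_node (hh : 0 < h)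
    (hψ : ∀ n : ℕ, ∀ t ∈ Ioc ((n : ℝ) * h) (((n : ℝ) + 1) * h), ψ t = (P n).eval t) (n : ℕ) :
    IntervalIntegrable ψ volume 0 ((n : ℝ) * h) := by
  simpa using IntervalIntegrable.trans_iterate (a := fun k : ℕ => (k : ℝ) * h) (n := n)
    fun k _ => by simpa using intervalIntegrable_element hh hψ k

theorem continuousOn_primitive_element (hh : 0 < h)
    (hψ : ∀ n : ℕ, ∀ t ∈ Ioc ((n : ℝ) * h) (((n : ℝ) + 1) * h), ψ t = (P n).eval t) (n : ℕ) :
    ContinuousOn (fun u => ∫ τ in (0 : ℝ)..u, ψ τ) (Icc ((n : ℝ) * h) (((n : ℝ) + 1) * h)) := by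
  have hint := (intervalIntegrable_zero_node hh hψ n).trans (intervalIntegrable_element hh hψ n)
  refine (intervalIntegral.continuousOn_primitive_interval' hint left_mem_uIcc).mono ?_
  rw [uIcc_of_le (by positivity)]
  exact Icc_subset_Icc_left (by positivity)

theorem hasDerivAt_primitive_of_mem_element (hh : 0 < h)
    (hψ : ∀ n : ℕ, ∀ t ∈ Ioc ((n : ℝ) * h) (((n : ℝ) + 1) * h), ψ t = (P n).eval t) {n : ℕ}
    {t : ℝ} (ht : t ∈ Ioo ((n : ℝ) * h) (((n : ℝ) + 1) * h)) :
    HasDerivAt (fun u => ∫ τ in (0 : ℝ)..u, ψ τ) ((P n).eval t) t := by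
  have hcont : ContinuousOn ψ (Ioo ((n : ℝ) * h) (((n : ℝ) + 1) * h)) :=
    (P n).continuous.continuousOn.congr fun s hs => hψ n s (Ioo_subset_Ioc_self hs)
  have hint : IntervalIntegrable ψ volume 0 t :=
    (intervalIntegrable_zero_node hh hψ n).trans ((intervalIntegrable_element hh hψ n).mono_set
      (uIcc_subset_uIcc_left (mem_uIcc_of_le ht.1.le ht.2.le)))
  rw [← hψ n t (Ioo_subset_Ioc_self ht)]
  exact intervalIntegral.integral_hasDerivAt_right hint
    (hcont.stronglyMeasurableAtFilter isOpen_Ioo t ht) (hcont.continuousAt (Ioo_mem_nhds ht.1 ht.2))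

end PiecewisePolynomial

/-- `P n`, `Q n` and `V n` are the restrictions of `ψ`, `𝓘_p y` and `v` to the `n`-th element
`(n h, (n + 1) h]`; the `if` encodes the convention `(𝓘_p y)(t_0⁻) = 0`. -/
theorem stmt_8_general (h : ℝ) (hh : 0 < h) (p : ℕ)
    (P Q V : ℕ → Polynomial ℝ)
    (hVdeg : ∀ n, (V n).degree ≤ (p : ℕ))
    (ψ y : ℝ → ℝ)
    (hψ : ∀ n : ℕ, ∀ t ∈ Set.Ioc ((n : ℝ) * h) (((n : ℝ) + 1) * h), ψ t = (P n).eval t)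
    (hy : ∀ t : ℝ, y t = ∫ τ in (0:ℝ)..t, ψ τ)
    (hQinterp : ∀ n : ℕ, (Q n).eval (((n : ℝ) + 1) * h) = y (((n : ℝ) + 1) * h))
    (hQorth : ∀ n : ℕ, ∀ r : Polynomial ℝ, r.degree < (p : ℕ) →
      (∫ t in ((n : ℝ) * h)..(((n : ℝ) + 1) * h), ((Q n).eval t - y t) * r.eval t) = 0) :
    (∑' n : ℕ,
        ((∫ t in ((n : ℝ) * h)..(((n : ℝ) + 1) * h),
            (Polynomial.derivative (Q n)).eval t * (V n).eval t)
          + ((Q n).eval ((n : ℝ) * h)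
              - (if n = 0 then 0 else (Q (n - 1)).eval ((n : ℝ) * h)))
            * (V n).eval ((n : ℝ) * h)))
      = ∑' n : ℕ, ∫ t in ((n : ℝ) * h)..(((n : ℝ) + 1) * h),
          (P n).eval t * (V n).eval t := by
  obtain rfl : y = fun t => ∫ τ in (0 : ℝ)..t, ψ τ := funext hy
  refine tsum_congr fun n => ?_
  have hprev : (if n = 0 then 0 else (Q (n - 1)).eval ((n : ℝ) * h))
      = ∫ τ in (0 : ℝ)..(n : ℝ) * h, ψ τ := by
    rcases n with _ | m
    · simp
    · simpa using hQinterp m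
  rw [hprev]
  exact integral_derivative_mul_add_jump_eq (node_le_succ_node hh n)
    (continuousOn_primitive_element hh hψ n)
    (fun t ht => hasDerivAt_primitive_of_mem_element hh hψ ht)
    ((P n).continuous.intervalIntegrable _ _) (hQinterp n)
    (hQorth n _ (degree_derivative_lt_of_degree_le (hVdeg n)))

/-- discrete integration. Let `ψ ∈ 𝒮^{p,0}(𝒯_h)` be a piecewise polynomial
of degree `≤ p` (given by the polynomials `P n` on the elements `(n·h, (n+1)·h)`),
let `y(t) = ∫₀^t ψ`, and let `𝓘_p y` be the elementwise projection of `y` (given by the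
polynomials `Q n`, interpolatory at the right endpoints and `L²`-orthogonal to
polynomials of degree `< p` against `y`).  Then for every test function
`v ∈ 𝒮̃^{p,0}(𝒯_h)` (given by polynomials `V n` of degree `≤ p`, eventually zero):
`∫₀^∞ (𝓘_p y)' v dt + Σ_n ⟦𝓘_p y⟧_{t_n} v(t_n⁺) = ∫₀^∞ ψ v dt`,
with the convention `(𝓘_p y)(t_0⁻) = 0`, i.e. `𝓘_p y` is the DG approximation of
`y' = ψ`, `y(0) = 0`. -/
theorem stmt_8 (h : ℝ) (hh : 0 < h) (p : ℕ)
    (P Q V : ℕ → Polynomial ℝ)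
    (hPdeg : ∀ n, (P n).degree ≤ (p : ℕ))
    (hQdeg : ∀ n, (Q n).degree ≤ (p : ℕ))
    (hVdeg : ∀ n, (V n).degree ≤ (p : ℕ))
    (hVsupp : ∃ N : ℕ, ∀ n, N ≤ n → V n = 0)
    (ψ y : ℝ → ℝ)
    (hψ : ∀ n : ℕ, ∀ t ∈ Set.Ioc ((n : ℝ) * h) (((n : ℝ) + 1) * h), ψ t = (P n).eval t)
    (hy : ∀ t : ℝ, y t = ∫ τ in (0:ℝ)..t, ψ τ)
    (hQinterp : ∀ n : ℕ, (Q n).eval (((n : ℝ) + 1) * h) = y (((n : ℝ) + 1) * h))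
    (hQorth : ∀ n : ℕ, ∀ r : Polynomial ℝ, r.degree < (p : ℕ) →
      (∫ t in ((n : ℝ) * h)..(((n : ℝ) + 1) * h), ((Q n).eval t - y t) * r.eval t) = 0) :
    (∑' n : ℕ,
        ((∫ t in ((n : ℝ) * h)..(((n : ℝ) + 1) * h),
            (Polynomial.derivative (Q n)).eval t * (V n).eval t)
          + ((Q n).eval ((n : ℝ) * h)
              - (if n = 0 then 0 else (Q (n - 1)).eval ((n : ℝ) * h)))
            * (V n).eval ((n : ℝ) * h)))
      = ∑' n : ℕ, ∫ t in ((n : ℝ) * h)..(((n : ℝ) + 1) * h),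
          (P n).eval t * (V n).eval t :=
  stmt_8_general h hh p P Q V hVdeg ψ y hψ hy hQinterp hQorth
end

section
/- There exists a constant C > 0 such that for all integers p ≥ 1 and s with 1 ≤ s ≤ p: Γ(p+1−s) / Γ(p+1+s) ≤ C · ( e / (p+s) )^{2s}, where Γ denotes the Gamma function and e is Euler's number. -/
open Nat Real

/- Going from `n` to `n + 1` multiplies the left side by `(1 + 1/n) ^ (n - m) * (n + 1) / e`,
and `(1 + 1/n) ^ (n - m) ≤ (1 + 1/n) ^ n ≤ e`. -/
theorem pow_div_exp_mul_factorial_le_factorial {m n : ℕ} (h : m ≤ n) :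
    ((n : ℝ) / exp 1) ^ (n - m) * m ! ≤ n ! := by
  induction n, h using Nat.le_induction with
  | base => simp
  | succ n hmn ih =>
    rcases n.eq_zero_or_pos with rfl | hn
    · obtain rfl : m = 0 := by omega
      simpa using inv_le_one_of_one_le₀ (one_le_exp zero_le_one)
    have hratio : (1 + (n : ℝ)⁻¹) ^ (n - m) ≤ exp 1 :=
      (pow_le_pow_right₀ (by simp) (Nat.sub_le n m)).trans one_add_inv_pow_le_exp
    have hfactor : (1 + (n : ℝ)⁻¹) * (n / exp 1) = (n + 1) / exp 1 := by field_simp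
    calc (((n + 1 : ℕ) : ℝ) / exp 1) ^ (n + 1 - m) * m !
        = ((1 + (n : ℝ)⁻¹) * (n / exp 1)) ^ (n - m) * ((n + 1) / exp 1) * m ! := by
          rw [show n + 1 - m = n - m + 1 by omega, pow_succ, hfactor, Nat.cast_succ]
      _ = (1 + (n : ℝ)⁻¹) ^ (n - m) * ((n + 1) / exp 1)
            * (((n : ℝ) / exp 1) ^ (n - m) * m !) := by
          rw [mul_pow]
          ring
      _ ≤ exp 1 * ((n + 1) / exp 1) * n ! := by gcongr
      _ = (n + 1 : ℕ) ! := by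
          rw [Nat.factorial_succ]
          field_simp
          push_cast
          ring

theorem factorial_div_factorial_le {m n : ℕ} (h : m ≤ n) :
    (m ! : ℝ) / n ! ≤ (exp 1 / n) ^ (n - m) := by
  rcases n.eq_zero_or_pos with rfl | hn
  · obtain rfl : m = 0 := by omega
    simp
  have hn' : (0 : ℝ) < n := by exact_mod_cast hn
  rw [div_le_iff₀ (by positivity)]
  calc (m ! : ℝ) = (exp 1 / n) ^ (n - m) * (((n : ℝ) / exp 1) ^ (n - m) * m !) := by
        rw [← mul_assoc, ← mul_pow, div_mul_div_cancel₀', div_self hn'.ne', one_pow, one_mul]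
        exact (exp_pos 1).ne'
    _ ≤ (exp 1 / n) ^ (n - m) * n ! := by
        gcongr
        exact pow_div_exp_mul_factorial_le_factorial h

/-- there is `C > 0` such that for all integers `1 ≤ s ≤ p`:
`Γ(p+1−s)/Γ(p+1+s) ≤ C (e/(p+s))^{2s}`. -/
theorem stmt_9 :
    ∃ C : ℝ, 0 < C ∧
      ∀ p s : ℕ, 1 ≤ s → s ≤ p →
        Real.Gamma ((p : ℝ) + 1 - (s : ℝ)) / Real.Gamma ((p : ℝ) + 1 + (s : ℝ))
          ≤ C * (Real.exp 1 / ((p : ℝ) + (s : ℝ))) ^ (2 * s) := by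
  refine ⟨1, one_pos, fun p s _ hsp => ?_⟩
  have hlow : (p : ℝ) + 1 - s = ((p - s : ℕ) : ℝ) + 1 := by push_cast [Nat.cast_sub hsp]; ring
  have hhigh : (p : ℝ) + 1 + s = ((p + s : ℕ) : ℝ) + 1 := by push_cast; ring
  rw [hlow, hhigh, Gamma_nat_eq_factorial, Gamma_nat_eq_factorial, one_mul]
  have hexp : p + s - (p - s) = 2 * s := by omega
  simpa [hexp] using factorial_div_factorial_le (show p - s ≤ p + s by omega)
end
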